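/- Let (X,d) be a metric space. The following are equivalent: (a) (X,d) is complete; (b) whenever f : (X,d) → ℝ is a locally Lipschitz TB-regular function such that f(x) ≠ 0 for all x ∈ X, the function 1/f is also locally Lipschitz and TB-regular; (c) whenever f : (X,d) → ℝ is a continuous TB-regular function such that f(x) ≠ 0 for all x ∈ X, the function 1/f is also continuous and TB-regular. -/

import Mathlib

/-!
In a complete space a totally bounded set has compact closure, so every continuous map is
TB-regular; in particular so is `1/f`, which is moreover locally Lipschitz when `f` is, since
inversion is `C¹` away from `0`. If `X` is not complete, a Cauchy sequence `u` without limit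
converges in the completion to a point `ξ` outside `X`. Then `f = dist (·, ξ)` is positive,
`1`-Lipschitz and hence TB-regular, but `1/f` is unbounded on the totally bounded set
`range u`.
-/

universe u

/-- `f` is TB-regular if it maps totally bounded sets to totally bounded sets. -/
def TBRegular {X : Type u} {Y : Type*} [MetricSpace X] [MetricSpace Y] (f : X → Y) : Prop :=
  ∀ A : Set X, TotallyBounded A → TotallyBounded (f '' A)

/-- `f` is locally Lipschitz if each point has an open ball around it on which `f` is
Lipschitz. -/
def LocallyLip {X : Type u} {Y : Type*} [MetricSpace X] [MetricSpace Y] (f : X → Y) : Prop :=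
  ∀ x : X, ∃ δ > (0 : ℝ), ∃ K : NNReal, LipschitzOnWith K f (Metric.ball x δ)

open Filter Set Topology UniformSpace

theorem LocallyLipschitz.inv₀ {α 𝕜 : Type*} [PseudoEMetricSpace α] [RCLike 𝕜] {f : α → 𝕜}
    (hf : LocallyLipschitz f) (h0 : ∀ x, f x ≠ 0) : LocallyLipschitz fun x => (f x)⁻¹ := by
  intro x
  obtain ⟨Kf, t, ht, hfK⟩ := hf x
  obtain ⟨Ki, s, hs, hiK⟩ := ((contDiffAt_inv 𝕜 (h0 x)).exists_lipschitzOnWith :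
    ∃ K, ∃ s ∈ 𝓝 (f x), LipschitzOnWith K (Inv.inv : 𝕜 → 𝕜) s)
  refine ⟨Ki * Kf, t ∩ f ⁻¹' s, inter_mem ht (hf.continuous.continuousAt hs), ?_⟩
  exact hiK.comp (hfK.mono inter_subset_left) ((mapsTo_preimage f s).mono_left inter_subset_right)

section

variable {X Y : Type*} [MetricSpace X] [MetricSpace Y]

theorem locallyLip_iff_locallyLipschitz {f : X → Y} : LocallyLip f ↔ LocallyLipschitz f := by
  refine ⟨fun hf x => ?_, fun hf x => ?_⟩
  · obtain ⟨δ, hδ, K, hK⟩ := hf x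
    exact ⟨K, Metric.ball x δ, Metric.ball_mem_nhds x hδ, hK⟩
  · obtain ⟨K, t, ht, hK⟩ := hf x
    obtain ⟨δ, hδ, hball⟩ := Metric.mem_nhds_iff.1 ht
    exact ⟨δ, hδ, K, hK.mono hball⟩

theorem UniformContinuous.tbRegular {f : X → Y} (hf : UniformContinuous f) : TBRegular f :=
  fun _ hA => hA.image hf

theorem Continuous.tbRegular [CompleteSpace X] {f : X → Y} (hf : Continuous f) :
    TBRegular f := fun _ hA =>
  ((hA.closure.isCompact_of_isClosed isClosed_closure).image hf).totallyBounded.subset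
    (image_mono subset_closure)

theorem exists_lipschitzWith_pos_tendsto_zero_of_not_completeSpace (h : ¬CompleteSpace X) :
    ∃ f : X → ℝ, LipschitzWith 1 f ∧ (∀ x, 0 < f x) ∧
      ∃ u : ℕ → X, CauchySeq u ∧ Tendsto (f ∘ u) atTop (𝓝 0) := by
  obtain ⟨u, hu, hnolim⟩ : ∃ u : ℕ → X, CauchySeq u ∧ ∀ x, ¬Tendsto u atTop (𝓝 x) := by
    simpa using mt Metric.complete_of_cauchySeq_tendsto h
  have hcoe : Isometry ((↑) : X → Completion X) := Completion.coe_isometry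
  obtain ⟨ξ, hξ⟩ := cauchySeq_tendsto_of_complete (hcoe.uniformContinuous.comp_cauchySeq hu)
  have hξX : ∀ x : X, (x : Completion X) ≠ ξ := by
    rintro x rfl
    exact hnolim x (hcoe.isUniformInducing.isInducing.tendsto_nhds_iff.2 hξ)
  refine ⟨fun x => dist (x : Completion X) ξ, ?_, fun x => dist_pos.2 (hξX x), u, hu,
    tendsto_iff_dist_tendsto_zero.1 hξ⟩
  simpa [Function.comp_def] using (LipschitzWith.dist_left ξ).comp hcoe.lipschitz

theorem not_tbRegular_inv_of_tendsto_zero {f : X → ℝ} (hf : ∀ x, 0 < f x) {u : ℕ → X}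
    (hu : CauchySeq u) (hfu : Tendsto (f ∘ u) atTop (𝓝 0)) :
    ¬TBRegular fun x => (f x)⁻¹ := by
  intro hinv
  have hbdd : BddAbove ((fun x => (f x)⁻¹) '' range u) :=
    (hinv _ hu.totallyBounded_range).isBounded.bddAbove
  have htop : Tendsto (fun n => (f (u n))⁻¹) atTop atTop :=
    (tendsto_nhdsWithin_iff.2 ⟨hfu, .of_forall fun n => hf (u n)⟩).inv_tendsto_nhdsGT_zero
  exact not_bddAbove_of_tendsto_atTop htop (by rwa [← range_comp] at hbdd)

theorem exists_tbRegular_not_tbRegular_inv_of_not_completeSpace (h : ¬CompleteSpace X) :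
    ∃ f : X → ℝ, LipschitzWith 1 f ∧ TBRegular f ∧ (∀ x, f x ≠ 0) ∧
      ¬TBRegular fun x => (f x)⁻¹ := by
  obtain ⟨f, hlip, hpos, u, hu, hfu⟩ :=
    exists_lipschitzWith_pos_tendsto_zero_of_not_completeSpace h
  exact ⟨f, hlip, hlip.uniformContinuous.tbRegular, fun x => (hpos x).ne',
    not_tbRegular_inv_of_tendsto_zero hpos hu hfu⟩

end

theorem complete_iff_reciprocal_tbRegular {X : Type u} [MetricSpace X] :
    List.TFAE
      [CompleteSpace X,
       ∀ f : X → ℝ, LocallyLip f → TBRegular f → (∀ x : X, f x ≠ 0) →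
         (LocallyLip (fun x => (f x)⁻¹) ∧ TBRegular (fun x => (f x)⁻¹)),
       ∀ f : X → ℝ, Continuous f → TBRegular f → (∀ x : X, f x ≠ 0) →
         (Continuous (fun x => (f x)⁻¹) ∧ TBRegular (fun x => (f x)⁻¹))] := by
  simp only [locallyLip_iff_locallyLipschitz]
  tfae_have 1 → 2 := fun _ f hf _ h0 =>
    ⟨hf.inv₀ h0, (hf.continuous.inv₀ h0).tbRegular⟩
  tfae_have 1 → 3 := fun _ f hf _ h0 => ⟨hf.inv₀ h0, (hf.inv₀ h0).tbRegular⟩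
  tfae_have 2 → 1 := fun h2 => by
    by_contra hX
    obtain ⟨f, hlip, htb, h0, hinv⟩ := exists_tbRegular_not_tbRegular_inv_of_not_completeSpace hX
    exact hinv (h2 f hlip.locallyLipschitz htb h0).2
  tfae_have 3 → 1 := fun h3 => by
    by_contra hX
    obtain ⟨f, hlip, htb, h0, hinv⟩ := exists_tbRegular_not_tbRegular_inv_of_not_completeSpace hX
    exact hinv (h3 f hlip.continuous htb h0).2
  tfae_finish
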